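/- arXiv:1710.11108 — 3 statements merged into one kernel-verified Lean document; each statement's English description precedes it below -/
import Mathlib

section
/- Fix c > 0 and s_0 > s_*, and suppose 0 ≤ -y_* ≤ c. Then there exists a_0 ≥ 0, depending only on c and s_0 - s_*, such that for all a > a_0 the solution y of the initial value problem y' = -a + y²/2, y(s_*) = y_*, satisfies -y(s) ≥ c for all s > s_0 (on its interval of existence). -/
/-!
The argument of `tanh` decreases in `s`, and since `artanh` is nonpositive on `[-1, 0]` it is at
most `-√(a/2) Δ ≤ -1` for `s > s₀` once `a ≥ 2 / Δ²`. Hence `-y s ≥ √(2a) tanh 1`, which exceeds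
`c` once `a ≥ (c / tanh 1)² / 2`; the same bound gives `|ym| ≤ c ≤ √(2a)`, so the initial value
lies where the explicit formula is the solution.
-/

/-- The inverse hyperbolic tangent. -/
noncomputable def artanh (x : ℝ) : ℝ := Real.log ((1 + x) / (1 - x)) / 2

theorem Real.strictMono_tanh : StrictMono Real.tanh := fun x y hxy => by
  rwa [← Real.artanh_lt_artanh_iff ⟨Real.neg_one_lt_tanh x, Real.tanh_lt_one x⟩
    ⟨Real.neg_one_lt_tanh y, Real.tanh_lt_one y⟩, Real.artanh_tanh, Real.artanh_tanh]

theorem artanh_eq_real_artanh {x : ℝ} (hx : x ∈ Set.Icc (-1) 1) : artanh x = Real.artanh x := by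
  rw [Real.artanh_eq_half_log hx, artanh]
  ring

theorem artanh_nonpos {x : ℝ} (hx₁ : -1 ≤ x) (hx₀ : x ≤ 0) : artanh x ≤ 0 := by
  rw [artanh_eq_real_artanh ⟨hx₁, by linarith⟩]
  exact Real.artanh_nonpos hx₀

theorem mul_tanh_one_le_neg_mul_tanh {R u : ℝ} (hR : 0 ≤ R) (hu : u ≤ -1) :
    R * Real.tanh 1 ≤ -(R * Real.tanh u) := by
  have h : Real.tanh u ≤ -Real.tanh 1 := by
    rw [← Real.tanh_neg]
    exact Real.strictMono_tanh.monotone hu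
  nlinarith

theorem one_le_sqrt_half_mul {a Δ : ℝ} (hΔ : 0 < Δ) (ha : 2 / Δ ^ 2 ≤ a) :
    1 ≤ Real.sqrt (a / 2) * Δ := by
  have h : 1 ≤ a / 2 * Δ ^ 2 := by
    rw [div_le_iff₀ (by positivity)] at ha
    linarith
  calc 1 ≤ Real.sqrt (a / 2 * Δ ^ 2) := Real.one_le_sqrt.mpr h
    _ = Real.sqrt (a / 2) * Δ := by rw [Real.sqrt_mul' _ (sq_nonneg Δ), Real.sqrt_sq hΔ.le]

theorem le_sqrt_two_mul_mul_of_sq_div_le {a c T : ℝ} (hT : 0 < T) (ha : (c / T) ^ 2 / 2 ≤ a) :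
    c ≤ Real.sqrt (2 * a) * T := by
  have h : c / T ≤ Real.sqrt (2 * a) :=
    (le_abs_self _).trans (Real.abs_le_sqrt (by linarith))
  rwa [div_le_iff₀ hT] at h

theorem riccati_growth_estimate_general (c Δ : ℝ) (hΔ : 0 < Δ) :
    ∃ a₀ : ℝ, 0 ≤ a₀ ∧ ∀ sm s₀ ym : ℝ, s₀ - sm = Δ →
      0 ≤ -ym → -ym ≤ c → ∀ a : ℝ, a > a₀ →
        ∀ s : ℝ, s > s₀ →
          c ≤ -(Real.sqrt (2 * a) *
            Real.tanh (Real.sqrt (a / 2) * (sm - s) + artanh (ym / Real.sqrt (2 * a)))) := by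
  set T := Real.tanh 1
  have hT : 0 < T := by simpa using Real.strictMono_tanh one_pos
  refine ⟨max (2 / Δ ^ 2) ((c / T) ^ 2 / 2), le_max_of_le_left (by positivity), ?_⟩
  intro sm s₀ ym hgap hym₀ hymc a ha s hs
  have hlarge : 1 ≤ Real.sqrt (a / 2) * Δ := one_le_sqrt_half_mul hΔ (le_of_max_le_left ha.le)
  have hcT : c ≤ Real.sqrt (2 * a) * T :=
    le_sqrt_two_mul_mul_of_sq_div_le hT (le_of_max_le_right ha.le)
  have ha₀ : 0 < a := ((by positivity : 0 < 2 / Δ ^ 2).trans_le (le_max_left _ _)).trans ha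
  have hsqrt : 0 < Real.sqrt (2 * a) := Real.sqrt_pos.mpr (by linarith)
  have hym : -1 ≤ ym / Real.sqrt (2 * a) := by
    rw [le_div_iff₀ hsqrt]
    nlinarith [Real.tanh_lt_one 1]
  have hart := artanh_nonpos hym (div_nonpos_of_nonpos_of_nonneg (by linarith) hsqrt.le)
  have harg : Real.sqrt (a / 2) * (sm - s) + artanh (ym / Real.sqrt (2 * a)) ≤ -1 := by
    nlinarith [Real.sqrt_nonneg (a / 2)]
  exact hcT.trans (mul_tanh_one_le_neg_mul_tanh hsqrt.le harg)

/-- For any `c > 0` and time gap `Δ = s₀ - sm > 0` there is `a₀ ≥ 0`, depending only on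
`c` and `Δ`, such that for all `a > a₀` the explicit solution of `y' = -a + y²/2`,
`y sm = ym` with `0 ≤ -ym ≤ c` satisfies `-y s ≥ c` for all `s > s₀`. -/
theorem riccati_growth_estimate (c Δ : ℝ) (hc : 0 < c) (hΔ : 0 < Δ) :
    ∃ a₀ : ℝ, 0 ≤ a₀ ∧ ∀ sm s₀ ym : ℝ, s₀ - sm = Δ →
      0 ≤ -ym → -ym ≤ c → ∀ a : ℝ, a > a₀ →
        ∀ s : ℝ, s > s₀ →
          c ≤ -(Real.sqrt (2 * a) *
            Real.tanh (Real.sqrt (a / 2) * (sm - s) + artanh (ym / Real.sqrt (2 * a)))) :=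
  riccati_growth_estimate_general c Δ hΔ
end

section
/- Let u : [0,T) → ℝ be C², let h : (0,T) → ℝ be continuous, and suppose u satisfies the conservation law u''(t) + (−u'(t) + h(t))·u'(t) = C + ε·u(t) on (0,T), with ε ≥ 0, C < 0, u(0) = 0, u'(0) = 0, and suppose u'(t) < 0 for all sufficiently small t > 0. Then u'(t) < 0 and u(t) < 0 for all t ∈ (0,T). -/
/-!
If `u'` vanished somewhere in `(0,T)`, take the first such point `t₀`. Since `u' < 0` on
`(0,t₀)`, `u(t₀) < u(0) = 0` and `u''(t₀) ≥ 0` (as `u'` rises to `0` from below). But at `t₀` the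
conservation law reads `u''(t₀) = C + ε u(t₀) < 0`.
-/

open Set Filter Topology

theorem HasDerivAt.nonneg_of_le_left {g : ℝ → ℝ} {g' a c : ℝ} (hg : HasDerivAt g g' c)
    (ha : a < c) (hle : ∀ s ∈ Ioo a c, g s ≤ g c) : 0 ≤ g' := by
  refine ge_of_tendsto ((hasDerivAt_iff_tendsto_slope.mp hg).mono_left (nhdsLT_le_nhdsNE c)) ?_
  filter_upwards [Ioo_mem_nhdsLT ha] with s hs
  rw [slope_def_field]
  exact div_nonneg_of_nonpos (sub_nonpos.mpr (hle s hs)) (sub_nonpos.mpr hs.2.le)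

theorem Continuous.nonpos_of_neg_left {f : ℝ → ℝ} (hf : Continuous f) {a c : ℝ} (ha : a < c)
    (hneg : ∀ s ∈ Ioo a c, f s < 0) : f c ≤ 0 :=
  le_of_tendsto (hf.continuousAt.tendsto.mono_left nhdsWithin_le_nhds)
    (eventually_of_mem (Ioo_mem_nhdsLT ha) fun s hs => (hneg s hs).le)

theorem Continuous.exists_first_zero {f : ℝ → ℝ} (hf : Continuous f) {δ b : ℝ} (hδ : 0 < δ)
    (hneg : ∀ t ∈ Ioo 0 δ, f t < 0) (hb : 0 < b) (hfb : 0 ≤ f b) :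
    ∃ c ∈ Ioc 0 b, f c = 0 ∧ ∀ s ∈ Ioo 0 c, f s < 0 := by
  have hδb : δ ≤ b := not_lt.mp fun hbδ => (hneg b ⟨hb, hbδ⟩).not_ge hfb
  obtain ⟨c, ⟨⟨hδc, hcb⟩, hfc⟩, hleast⟩ :=
    (isCompact_Icc.inter_right (isClosed_le continuous_const hf)).exists_isLeast
      (s := Icc (δ / 2) b ∩ {s | 0 ≤ f s}) ⟨b, ⟨by linarith, le_rfl⟩, hfb⟩
  have hc : 0 < c := by linarith
  have hneg_c : ∀ s ∈ Ioo 0 c, f s < 0 := by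
    intro s ⟨hs0, hsc⟩
    by_cases hsδ : s < δ
    · exact hneg s ⟨hs0, hsδ⟩
    · refine not_le.mp fun hfs => hsc.not_ge (hleast ⟨⟨?_, hsc.le.trans hcb⟩, hfs⟩)
      linarith
  exact ⟨c, ⟨hc, hcb⟩, le_antisymm (hf.nonpos_of_neg_left hc hneg_c) hfc, hneg_c⟩

theorem neg_of_deriv_neg_of_eq_zero {u : ℝ → ℝ} (hu : Differentiable ℝ u) (hu0 : u 0 = 0)
    {t : ℝ} (ht : 0 < t) (hneg : ∀ s ∈ Ioo 0 t, deriv u s < 0) : u t < 0 := by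
  have hanti : StrictAntiOn u (Icc 0 t) :=
    strictAntiOn_of_deriv_neg (convex_Icc 0 t) hu.continuous.continuousOn
      (by rwa [interior_Icc])
  simpa [hu0] using hanti ⟨le_rfl, ht.le⟩ ⟨ht.le, le_rfl⟩ ht

theorem soliton_potential_decreasing_general (T ε C : ℝ) (hε : 0 ≤ ε) (hC : C < 0)
    (u h : ℝ → ℝ) (hu : ContDiff ℝ 2 u)
    (hcons : ∀ t ∈ Set.Ioo 0 T,
      deriv (deriv u) t + (-(deriv u t) + h t) * deriv u t = C + ε * u t)
    (hu0 : u 0 = 0)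
    (hsmall : ∃ δ > 0, ∀ t ∈ Set.Ioo 0 δ, deriv u t < 0) :
    ∀ t ∈ Set.Ioo 0 T, deriv u t < 0 ∧ u t < 0 := by
  have hud : Differentiable ℝ u := hu.differentiable (by norm_num)
  have hu'd : Differentiable ℝ (deriv u) :=
    (hu.iterate_deriv' 1 1).differentiable (by norm_num)
  obtain ⟨δ, hδ, hsmall⟩ := hsmall
  have hderiv_neg : ∀ t ∈ Ioo 0 T, deriv u t < 0 := by
    intro t ht
    by_contra! hnonneg
    obtain ⟨t₀, ⟨ht₀, ht₀t⟩, hzero, hneg⟩ :=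
      hu'd.continuous.exists_first_zero hδ hsmall ht.1 hnonneg
    have hut₀ : u t₀ < 0 := neg_of_deriv_neg_of_eq_zero hud hu0 ht₀ hneg
    have hu''t₀ : 0 ≤ deriv (deriv u) t₀ :=
      (hu'd t₀).hasDerivAt.nonneg_of_le_left ht₀ fun s hs => hzero ▸ (hneg s hs).le
    have hlaw := hcons t₀ ⟨ht₀, ht₀t.trans_lt ht.2⟩
    rw [hzero, mul_zero, add_zero] at hlaw
    linarith [mul_nonpos_of_nonneg_of_nonpos hε hut₀.le]
  exact fun t ht => ⟨hderiv_neg t ht, neg_of_deriv_neg_of_eq_zero hud hu0 ht.1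
    fun s hs => hderiv_neg s ⟨hs.1, hs.2.trans ht.2⟩⟩

/-- Monotonicity of the soliton potential: if `u` satisfies the conservation law
`u'' + (-u' + h)·u' = C + ε·u` with `ε ≥ 0`, `C < 0`, `u(0) = u'(0) = 0` and `u' < 0`
for small `t > 0`, then `u' < 0` and `u < 0` on all of `(0,T)`. -/
theorem soliton_potential_decreasing (T ε C : ℝ) (hT : 0 < T) (hε : 0 ≤ ε) (hC : C < 0)
    (u h : ℝ → ℝ) (hu : ContDiff ℝ 2 u) (hh : ContinuousOn h (Set.Ioo 0 T))
    (hcons : ∀ t ∈ Set.Ioo 0 T,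
      deriv (deriv u) t + (-(deriv u t) + h t) * deriv u t = C + ε * u t)
    (hu0 : u 0 = 0) (hu'0 : deriv u 0 = 0)
    (hsmall : ∃ δ > 0, ∀ t ∈ Set.Ioo 0 δ, deriv u t < 0) :
    ∀ t ∈ Set.Ioo 0 T, deriv u t < 0 ∧ u t < 0 :=
  soliton_potential_decreasing_general T ε C hε hC u h hu hcons hu0 hsmall
end

section
/- Let u : [0,T) → ℝ be C² and suppose there exists a > 0 such that u''(t) ≤ −a + u'(t)²/2 for all t ∈ [t_*, T), with 0 ≤ −u'(t_*) ≤ c for a given c > 0. Fix τ ∈ (t_*, T). If a > a_0, where a_0 ≥ 0 depends only on c and τ − t_*, then −u'(t) ≥ c for all t ∈ [τ, T). -/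
/-!
Write `v = u'` and `b = a - c²/2`. While `|v| ≤ c` the inequality gives `v' ≤ -b < 0`, so `v`
can never cross a level `L ∈ [-c, c]` upward: it stays `≤ 0` from `t_*` on, and once it has
reached `-c` it stays there. If `v > -c` throughout `[t_*, τ]`, then `v' ≤ -b` on that whole
interval and `v(τ) ≤ -b (τ - t_*) < -c` as soon as `a > c²/2 + c/(τ - t_*)`, a contradiction.
-/

open Set

theorem le_level_of_deriv_neg_at_level {f : ℝ → ℝ} (hf : Differentiable ℝ f) {L s t : ℝ}
    (hst : s ≤ t) (hs : f s ≤ L) (hL : ∀ x ∈ Ico s t, f x = L → deriv f x < 0) : f t ≤ L :=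
  image_le_of_deriv_right_lt_deriv_boundary (B := fun _ => L) hf.continuous.continuousOn
    (fun x _ => (hf x).hasDerivAt.hasDerivWithinAt) hs (fun _ => hasDerivAt_const _ _) hL
    ⟨hst, le_rfl⟩

section Riccati

variable {v : ℝ → ℝ} {a c tm T : ℝ}

theorem deriv_le_of_riccati_of_abs_le
    (hric : ∀ t ∈ Ico tm T, deriv v t ≤ -a + v t ^ 2 / 2) {t : ℝ} (ht : t ∈ Ico tm T)
    (hvt : |v t| ≤ c) : deriv v t ≤ -(a - c ^ 2 / 2) := by
  have hsq : v t ^ 2 ≤ c ^ 2 := sq_le_sq' (abs_le.mp hvt).1 (abs_le.mp hvt).2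
  linarith [hric t ht]

theorem le_level_of_riccati (hv : Differentiable ℝ v)
    (hric : ∀ t ∈ Ico tm T, deriv v t ≤ -a + v t ^ 2 / 2) (ha : c ^ 2 / 2 < a) {L : ℝ}
    (hL : |L| ≤ c) {s t : ℝ} (hs : tm ≤ s) (hst : s ≤ t) (htT : t < T) (hvs : v s ≤ L) :
    v t ≤ L :=
  le_level_of_deriv_neg_at_level hv hst hvs fun x hx hxL =>
    (deriv_le_of_riccati_of_abs_le hric ⟨hs.trans hx.1, hx.2.trans htT⟩ (hxL ▸ hL)).trans_lt
      (by linarith)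

theorem exists_le_neg_of_riccati (hv : Differentiable ℝ v)
    (hric : ∀ t ∈ Ico tm T, deriv v t ≤ -a + v t ^ 2 / 2) {Δ : ℝ} (hc : 0 ≤ c) (hΔ : 0 < Δ)
    (ha : c ^ 2 / 2 + c / Δ < a) (hT : tm + Δ < T) (h0 : v tm ≤ 0) :
    ∃ s ∈ Icc tm (tm + Δ), v s ≤ -c := by
  by_contra! hgt
  have hcΔ : c < (a - c ^ 2 / 2) * Δ := by
    rw [← div_lt_iff₀ hΔ]
    linarith
  have ha' : c ^ 2 / 2 < a := by linarith [div_nonneg hc hΔ.le]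
  have hle0 : ∀ x ∈ Icc tm (tm + Δ), v x ≤ 0 := fun x hx =>
    le_level_of_riccati hv hric ha' (by simpa using hc) le_rfl hx.1 (hx.2.trans_lt hT) h0
  have hderiv : ∀ x ∈ interior (Icc tm (tm + Δ)), deriv v x ≤ -(a - c ^ 2 / 2) := by
    rw [interior_Icc]
    intro x hx
    have hx' := Ioo_subset_Icc_self hx
    exact deriv_le_of_riccati_of_abs_le hric ⟨hx.1.le, hx.2.trans hT⟩
      (abs_le.mpr ⟨(hgt x hx').le, (hle0 x hx').trans hc⟩)
  have hdrop := (convex_Icc tm (tm + Δ)).image_sub_le_mul_sub_of_deriv_le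
    hv.continuous.continuousOn hv.differentiableOn hderiv tm (left_mem_Icc.mpr (by linarith))
    (tm + Δ) (right_mem_Icc.mpr (by linarith)) (by linarith)
  have hend := hgt (tm + Δ) (right_mem_Icc.mpr (by linarith))
  simp only [add_sub_cancel_left] at hdrop
  linarith

end Riccati

/-- Growth estimate for the soliton potential: for `c > 0` and a time gap `Δ = τ - tm > 0`
there is `a₀ ≥ 0`, depending only on `c` and `Δ`, such that whenever a `C²` function `u`
satisfies `u'' ≤ -a + (u')²/2` on `[tm, T)` with `a > a₀` and `0 ≤ -u'(tm) ≤ c`, then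
`-u' ≥ c` on `[τ, T)`. -/
theorem potential_growth_estimate (c Δ : ℝ) (hc : 0 < c) (hΔ : 0 < Δ) :
    ∃ a₀ : ℝ, 0 ≤ a₀ ∧ ∀ (tm τ T a : ℝ) (u : ℝ → ℝ),
      τ - tm = Δ → τ < T → ContDiff ℝ 2 u → a > a₀ →
      (∀ t ∈ Set.Ico tm T, deriv (deriv u) t ≤ -a + (deriv u t) ^ 2 / 2) →
      0 ≤ -(deriv u tm) → -(deriv u tm) ≤ c →
      ∀ t ∈ Set.Ico τ T, c ≤ -(deriv u t) := by
  refine ⟨c ^ 2 / 2 + c / Δ, by positivity, ?_⟩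
  intro tm τ T a u hτ hτT hu ha hric h0 _ t ht
  have hv := hu.differentiable_deriv_two
  obtain ⟨s, hs, hvs⟩ :=
    exists_le_neg_of_riccati hv hric hc.le hΔ ha (by linarith) (by linarith)
  have ha' : c ^ 2 / 2 < a := by linarith [div_pos hc hΔ]
  have hvt := le_level_of_riccati hv hric ha' (L := -c) (by simp [abs_of_pos hc]) hs.1
    (by linarith [hs.2, ht.1]) ht.2 hvs
  linarith
end
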